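/- For probability measures μ, ν on ℝ with finite second moments, the squared 2-Wasserstein distance equals the integral over τ ∈ (0,1) of |F_μ^{-1}(τ) - F_ν^{-1}(τ)|², where F_μ^{-1}, F_ν^{-1} are the quantile functions (generalized inverses of the cumulative distribution functions) of μ and ν. -/

import Mathlib

/-!
The quantile coupling `σ`, the law of `(F_μ⁻¹(U), F_ν⁻¹(U))` for `U` uniform on `(0, 1)`, has
marginals `μ` and `ν` because `F⁻¹(τ) ≤ x ↔ τ ≤ F(x)`, and its cost is the right-hand side. Since
`|x - y|² = x² + y² - 2xy` and the marginals are fixed, optimality of `σ` means that it maximises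
`∫ xy dγ` among couplings `γ`. By Hoeffding's identity `xy = ∫∫ φ(x,s) φ(y,t) ds dt` with
`φ(x,s) = 1[s < x] - 1[s < 0]`, and `∫ φ(X,s) φ(Y,t) dγ` equals `γ(X > s, Y > t)` plus terms
fixed by the marginals. Fréchet's bound `γ(X > s, Y > t) ≤ min (μ(s,∞)) (ν(t,∞))` is attained
by `σ` for every `s, t`.
-/
open MeasureTheory Set

/-- Squared 2-Wasserstein distance, defined as the infimum over couplings of the
integral of the squared distance. -/
noncomputable def W2sq {α : Type*} [MeasurableSpace α] [PseudoMetricSpace α]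
    (μ ν : Measure α) : ℝ :=
  sInf { c | ∃ γ : Measure (α × α), γ.map Prod.fst = μ ∧ γ.map Prod.snd = ν ∧
      c = ∫ p, dist p.1 p.2 ^ 2 ∂γ }

/-- Cumulative distribution function. -/
noncomputable def cdf (μ : Measure ℝ) (x : ℝ) : ℝ := (μ (Iic x)).toReal

/-- Quantile function (generalized inverse of the CDF). -/
noncomputable def quantile (μ : Measure ℝ) (τ : ℝ) : ℝ := sInf { x | τ ≤ cdf μ x }

section Quantile

variable (μ : Measure ℝ) [IsProbabilityMeasure μ]

lemma cdf_eq_probabilityTheory_cdf : cdf μ = ProbabilityTheory.cdf μ :=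
  funext fun x => (ProbabilityTheory.cdf_eq_real μ x).symm

lemma monotone_cdf : Monotone (cdf μ) :=
  cdf_eq_probabilityTheory_cdf μ ▸ ProbabilityTheory.monotone_cdf μ

lemma cdf_le_one (x : ℝ) : cdf μ x ≤ 1 :=
  cdf_eq_probabilityTheory_cdf μ ▸ ProbabilityTheory.cdf_le_one μ x

lemma measureReal_Ioi_eq_one_sub_cdf (x : ℝ) : μ.real (Ioi x) = 1 - cdf μ x := by
  rw [← compl_Iic, probReal_compl_eq_one_sub measurableSet_Iic]
  rfl

variable {μ} {τ : ℝ}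

lemma bddBelow_setOf_le_cdf (hτ : 0 < τ) : BddBelow {x | τ ≤ cdf μ x} := by
  obtain ⟨y, hy⟩ := ((ProbabilityTheory.tendsto_cdf_atBot μ).eventually
    (eventually_lt_nhds hτ)).exists
  rw [← cdf_eq_probabilityTheory_cdf] at hy
  exact ⟨y, fun z hz => le_of_not_gt fun hzy => (hz.trans (monotone_cdf μ hzy.le)).not_gt hy⟩

lemma setOf_le_cdf_nonempty (hτ : τ < 1) : {x | τ ≤ cdf μ x}.Nonempty := by
  obtain ⟨x, hx⟩ := ((ProbabilityTheory.tendsto_cdf_atTop μ).eventually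
    (eventually_ge_nhds hτ)).exists
  exact ⟨x, (cdf_eq_probabilityTheory_cdf μ).symm ▸ hx⟩

/-- Right-continuity of the cdf is what makes the infimum defining the quantile attained. -/
lemma le_cdf_quantile (h0 : 0 < τ) (h1 : τ < 1) : τ ≤ cdf μ (quantile μ τ) := by
  have hright : ∀ x ∈ Ioi (quantile μ τ), τ ≤ cdf μ x := fun x hx => by
    obtain ⟨z, hz, hzx⟩ := (csInf_lt_iff (bddBelow_setOf_le_cdf h0)
      (setOf_le_cdf_nonempty h1)).1 hx
    exact hz.trans (monotone_cdf μ hzx.le)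
  rw [cdf_eq_probabilityTheory_cdf] at hright ⊢
  exact ge_of_tendsto (((ProbabilityTheory.cdf μ).right_continuous _).mono
    Ioi_subset_Ici_self).tendsto (eventually_nhdsWithin_of_forall hright)

lemma quantile_le_iff (h0 : 0 < τ) (h1 : τ < 1) {x : ℝ} :
    quantile μ τ ≤ x ↔ τ ≤ cdf μ x :=
  ⟨fun h => (le_cdf_quantile h0 h1).trans (monotone_cdf μ h),
    fun h => csInf_le (bddBelow_setOf_le_cdf h0) h⟩

lemma monotoneOn_quantile : MonotoneOn (quantile μ) (Ioo 0 1) := fun _ ha _ hb hab =>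
  (quantile_le_iff ha.1 ha.2).2 (hab.trans (le_cdf_quantile hb.1 hb.2))

lemma Ioo_inter_preimage_quantile_Ioi (x : ℝ) :
    Ioo 0 1 ∩ quantile μ ⁻¹' Ioi x = Ioo (cdf μ x) 1 := by
  ext τ
  simp only [mem_inter_iff, mem_Ioo, mem_preimage, mem_Ioi]
  constructor
  · rintro ⟨⟨h0, h1⟩, hx⟩
    exact ⟨lt_of_not_ge fun h => hx.not_ge ((quantile_le_iff h0 h1).2 h), h1⟩
  · rintro ⟨hx, h1⟩
    have h0 : 0 < τ := ENNReal.toReal_nonneg.trans_lt hx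
    exact ⟨⟨h0, h1⟩, lt_of_not_ge fun h => hx.not_ge ((quantile_le_iff h0 h1).1 h)⟩

variable (μ)

lemma aemeasurable_quantile : AEMeasurable (quantile μ) (volume.restrict (Ioo 0 1)) :=
  aemeasurable_restrict_of_monotoneOn measurableSet_Ioo monotoneOn_quantile

instance : IsProbabilityMeasure (volume.restrict (Ioo (0 : ℝ) 1)) :=
  ⟨by simp⟩

lemma map_quantile_Ioi (x : ℝ) :
    (volume.restrict (Ioo 0 1)).map (quantile μ) (Ioi x) = μ (Ioi x) := by
  rw [Measure.map_apply_of_aemeasurable (aemeasurable_quantile μ) measurableSet_Ioi,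
    Measure.restrict_apply' measurableSet_Ioo, inter_comm, Ioo_inter_preimage_quantile_Ioi,
    Real.volume_Ioo, ← measureReal_Ioi_eq_one_sub_cdf, ofReal_measureReal]

lemma map_quantile : (volume.restrict (Ioo 0 1)).map (quantile μ) = μ := by
  have : IsProbabilityMeasure ((volume.restrict (Ioo (0 : ℝ) 1)).map (quantile μ)) :=
    Measure.isProbabilityMeasure_map (aemeasurable_quantile μ)
  refine Measure.ext_of_Iic _ _ fun x => ?_
  rw [← compl_Ioi, prob_compl_eq_one_sub measurableSet_Ioi,
    prob_compl_eq_one_sub measurableSet_Ioi, map_quantile_Ioi]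

end Quantile

section Coupling

variable {α β E : Type*} [MeasurableSpace α] [MeasurableSpace β] [NormedAddCommGroup E]
  {μ : Measure α} {ν : Measure β} {γ : Measure (α × β)}

lemma integral_comp_fst_of_map_fst [NormedSpace ℝ E] (hγ : γ.map Prod.fst = μ) {f : α → E}
    (hf : AEStronglyMeasurable f μ) : ∫ p, f p.1 ∂γ = ∫ x, f x ∂μ := by
  subst hγ
  exact (integral_map measurable_fst.aemeasurable hf).symm

lemma integral_comp_snd_of_map_snd [NormedSpace ℝ E] (hγ : γ.map Prod.snd = ν) {f : β → E}
    (hf : AEStronglyMeasurable f ν) : ∫ p, f p.2 ∂γ = ∫ y, f y ∂ν := by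
  subst hγ
  exact (integral_map measurable_snd.aemeasurable hf).symm

lemma integrable_comp_fst_of_map_fst (hγ : γ.map Prod.fst = μ) {f : α → E}
    (hf : Integrable f μ) : Integrable (fun p => f p.1) γ := by
  subst hγ
  exact hf.comp_aemeasurable measurable_fst.aemeasurable

lemma integrable_comp_snd_of_map_snd (hγ : γ.map Prod.snd = ν) {f : β → E}
    (hf : Integrable f ν) : Integrable (fun p => f p.2) γ := by
  subst hγ
  exact hf.comp_aemeasurable measurable_snd.aemeasurable

lemma isProbabilityMeasure_of_map_fst [IsProbabilityMeasure μ] (hγ : γ.map Prod.fst = μ) :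
    IsProbabilityMeasure γ := by
  subst hγ
  exact Measure.isProbabilityMeasure_of_map Prod.fst

lemma measureReal_prod_le_min [IsFiniteMeasure μ] [IsFiniteMeasure ν]
    (hγ₁ : γ.map Prod.fst = μ) (hγ₂ : γ.map Prod.snd = ν) {s : Set α} {t : Set β}
    (hs : MeasurableSet s) (ht : MeasurableSet t) :
    γ.real (s ×ˢ t) ≤ min (μ.real s) (ν.real t) := by
  subst hγ₁ hγ₂
  rw [map_measureReal_apply measurable_fst hs, map_measureReal_apply measurable_snd ht]
  refine le_min (measureReal_mono (fun p hp => hp.1) ?_) (measureReal_mono (fun p hp => hp.2) ?_)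
  · rw [← Measure.map_apply measurable_fst hs]; finiteness
  · rw [← Measure.map_apply measurable_snd ht]; finiteness

end Coupling

section OrientedIndicator

/-- The signed indicator of the oriented interval from `0` to `x`. -/
noncomputable def orientedIndicator (x s : ℝ) : ℝ :=
  (if s < x then 1 else 0) - if s < 0 then 1 else 0

lemma orientedIndicator_eq_indicator_sub_indicator (x : ℝ) :
    orientedIndicator x = (Ico 0 x).indicator 1 - (Ico x 0).indicator 1 := by
  ext s
  simp only [orientedIndicator, Pi.sub_apply, indicator_apply, mem_Ico, Pi.one_apply]
  split_ifs <;> grind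

lemma measurable_orientedIndicator_uncurry : Measurable (Function.uncurry orientedIndicator) :=
  (measurable_const.ite (measurableSet_lt measurable_snd measurable_fst) measurable_const).sub
    (measurable_const.ite (measurableSet_lt measurable_snd measurable_const) measurable_const)

lemma integrable_indicator_one_Ico (a b : ℝ) : Integrable ((Ico a b).indicator (1 : ℝ → ℝ)) :=
  (integrable_indicator_iff measurableSet_Ico).2 (integrableOn_const measure_Ico_lt_top.ne)

lemma integrable_orientedIndicator (x : ℝ) : Integrable (orientedIndicator x) := by
  rw [orientedIndicator_eq_indicator_sub_indicator]
  exact (integrable_indicator_one_Ico 0 x).sub (integrable_indicator_one_Ico x 0)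

lemma integral_orientedIndicator (x : ℝ) : ∫ s, orientedIndicator x s = x := by
  rw [orientedIndicator_eq_indicator_sub_indicator,
    integral_sub' (integrable_indicator_one_Ico 0 x) (integrable_indicator_one_Ico x 0),
    integral_indicator_one measurableSet_Ico, integral_indicator_one measurableSet_Ico,
    Real.volume_real_Ico, Real.volume_real_Ico]
  rcases le_total 0 x with hx | hx <;> simp [hx]

lemma integral_abs_orientedIndicator (x : ℝ) : ∫ s, |orientedIndicator x s| = |x| := by
  rcases le_total 0 x with hx | hx
  · have hnonneg : ∀ s, 0 ≤ orientedIndicator x s := fun s => by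
      unfold orientedIndicator; split_ifs <;> linarith
    simp only [abs_of_nonneg (hnonneg _), abs_of_nonneg hx, integral_orientedIndicator]
  · have hnonpos : ∀ s, orientedIndicator x s ≤ 0 := fun s => by
      unfold orientedIndicator; split_ifs <;> linarith
    simp only [abs_of_nonpos (hnonpos _), abs_of_nonpos hx, integral_neg,
      integral_orientedIndicator]

lemma mul_eq_integral_orientedIndicator_mul (x y : ℝ) :
    x * y = ∫ q : ℝ × ℝ, orientedIndicator x q.1 * orientedIndicator y q.2
      ∂(volume.prod volume) := by
  rw [integral_prod_mul (orientedIndicator x) (orientedIndicator y),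
    integral_orientedIndicator, integral_orientedIndicator]

lemma orientedIndicator_mul_orientedIndicator (x y s t : ℝ) :
    orientedIndicator x s * orientedIndicator y t =
      (Ioi s ×ˢ Ioi t).indicator 1 (x, y) - (if s < 0 then 1 else 0) * (Ioi t).indicator 1 y
        - (if t < 0 then 1 else 0) * orientedIndicator x s := by
  simp only [orientedIndicator, indicator_apply, mem_prod, mem_Ioi, Pi.one_apply]
  split_ifs <;> grind

variable {γ : Measure (ℝ × ℝ)}

lemma integrable_orientedIndicator_mul_prod [SFinite γ]
    (hγ : Integrable (fun p : ℝ × ℝ => p.1 * p.2) γ) :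
    Integrable (fun z : (ℝ × ℝ) × (ℝ × ℝ) =>
      orientedIndicator z.1.1 z.2.1 * orientedIndicator z.1.2 z.2.2)
      (γ.prod (volume.prod volume)) := by
  have hmeas : Measurable fun z : (ℝ × ℝ) × (ℝ × ℝ) =>
      orientedIndicator z.1.1 z.2.1 * orientedIndicator z.1.2 z.2.2 :=
    (measurable_orientedIndicator_uncurry.comp (measurable_fst.fst.prodMk measurable_snd.fst)).mul
      (measurable_orientedIndicator_uncurry.comp (measurable_fst.snd.prodMk measurable_snd.snd))
  refine (integrable_prod_iff hmeas.aestronglyMeasurable).2 ⟨.of_forall fun p =>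
    (integrable_orientedIndicator p.1).mul_prod (integrable_orientedIndicator p.2), ?_⟩
  have hnorm : ∀ p : ℝ × ℝ, ∫ q : ℝ × ℝ, ‖orientedIndicator p.1 q.1 * orientedIndicator p.2 q.2‖
      ∂(volume.prod volume) = ‖p.1 * p.2‖ := fun p => by
    simp only [norm_mul, Real.norm_eq_abs]
    rw [integral_prod_mul (fun s => |orientedIndicator p.1 s|) (fun t => |orientedIndicator p.2 t|),
      integral_abs_orientedIndicator, integral_abs_orientedIndicator]
  simpa only [hnorm] using hγ.norm

lemma integral_mul_eq_integral_integral_orientedIndicator [SFinite γ]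
    (hγ : Integrable (fun p : ℝ × ℝ => p.1 * p.2) γ) :
    ∫ p, p.1 * p.2 ∂γ = ∫ q : ℝ × ℝ, ∫ p, orientedIndicator p.1 q.1 * orientedIndicator p.2 q.2 ∂γ
      ∂(volume.prod volume) := by
  calc ∫ p, p.1 * p.2 ∂γ
      = ∫ p, ∫ q : ℝ × ℝ, orientedIndicator p.1 q.1 * orientedIndicator p.2 q.2
          ∂(volume.prod volume) ∂γ :=
        integral_congr_ae (.of_forall fun p => mul_eq_integral_orientedIndicator_mul p.1 p.2)
    _ = _ := integral_integral_swap (integrable_orientedIndicator_mul_prod hγ)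

end OrientedIndicator

section ComonotoneCoupling

variable (μ ν : Measure ℝ) [IsProbabilityMeasure μ] [IsProbabilityMeasure ν]

noncomputable def comonotoneCoupling : Measure (ℝ × ℝ) :=
  (volume.restrict (Ioo 0 1)).map fun τ => (quantile μ τ, quantile ν τ)

lemma aemeasurable_quantile_prodMk :
    AEMeasurable (fun τ => (quantile μ τ, quantile ν τ)) (volume.restrict (Ioo 0 1)) :=
  (aemeasurable_quantile μ).prodMk (aemeasurable_quantile ν)

instance : IsProbabilityMeasure (comonotoneCoupling μ ν) :=
  Measure.isProbabilityMeasure_map (aemeasurable_quantile_prodMk μ ν)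

lemma comonotoneCoupling_map_fst : (comonotoneCoupling μ ν).map Prod.fst = μ := by
  rw [comonotoneCoupling, AEMeasurable.map_map_of_aemeasurable measurable_fst.aemeasurable
    (aemeasurable_quantile_prodMk μ ν)]
  exact map_quantile μ

lemma comonotoneCoupling_map_snd : (comonotoneCoupling μ ν).map Prod.snd = ν := by
  rw [comonotoneCoupling, AEMeasurable.map_map_of_aemeasurable measurable_snd.aemeasurable
    (aemeasurable_quantile_prodMk μ ν)]
  exact map_quantile ν

lemma integral_comonotoneCoupling {f : ℝ × ℝ → ℝ} (hf : Continuous f) :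
    ∫ p, f p ∂(comonotoneCoupling μ ν) = ∫ τ in Ioo 0 1, f (quantile μ τ, quantile ν τ) :=
  integral_map (aemeasurable_quantile_prodMk μ ν) hf.aestronglyMeasurable

lemma comonotoneCoupling_real_Ioi_prod_Ioi (s t : ℝ) :
    (comonotoneCoupling μ ν).real (Ioi s ×ˢ Ioi t) = min (μ.real (Ioi s)) (ν.real (Ioi t)) := by
  rw [comonotoneCoupling, map_measureReal_apply_of_aemeasurable (aemeasurable_quantile_prodMk μ ν)
    (measurableSet_Ioi.prod measurableSet_Ioi), mk_preimage_prod,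
    measureReal_restrict_apply' measurableSet_Ioo, inter_comm, inter_inter_distrib_left,
    Ioo_inter_preimage_quantile_Ioi, Ioo_inter_preimage_quantile_Ioi, Ioo_inter_Ioo, min_self,
    Real.volume_real_Ioo_of_le (max_le (cdf_le_one μ s) (cdf_le_one ν t)),
    measureReal_Ioi_eq_one_sub_cdf, measureReal_Ioi_eq_one_sub_cdf, min_sub_sub_left]

lemma integral_dist_sq_comonotoneCoupling :
    ∫ p, dist p.1 p.2 ^ 2 ∂(comonotoneCoupling μ ν) =
      ∫ τ in Ioo 0 1, |quantile μ τ - quantile ν τ| ^ 2 := by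
  rw [integral_comonotoneCoupling μ ν (by fun_prop)]
  simp only [Real.dist_eq]

end ComonotoneCoupling

section Optimality

variable {μ ν : Measure ℝ} {γ : Measure (ℝ × ℝ)}

lemma integrable_fst_mul_snd (hγ₁ : γ.map Prod.fst = μ) (hγ₂ : γ.map Prod.snd = ν)
    (hμ : Integrable (fun x => x ^ 2) μ) (hν : Integrable (fun x => x ^ 2) ν) :
    Integrable (fun p : ℝ × ℝ => p.1 * p.2) γ := by
  have h₁ : MemLp (fun p : ℝ × ℝ => p.1) 2 γ :=
    (memLp_two_iff_integrable_sq measurable_fst.aestronglyMeasurable).2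
      (integrable_comp_fst_of_map_fst hγ₁ hμ)
  have h₂ : MemLp (fun p : ℝ × ℝ => p.2) 2 γ :=
    (memLp_two_iff_integrable_sq measurable_snd.aestronglyMeasurable).2
      (integrable_comp_snd_of_map_snd hγ₂ hν)
  exact h₁.integrable_mul h₂

lemma integral_dist_sq_eq (hγ₁ : γ.map Prod.fst = μ) (hγ₂ : γ.map Prod.snd = ν)
    (hμ : Integrable (fun x => x ^ 2) μ) (hν : Integrable (fun x => x ^ 2) ν) :
    ∫ p, dist p.1 p.2 ^ 2 ∂γ = ∫ x, x ^ 2 ∂μ + ∫ y, y ^ 2 ∂ν - 2 * ∫ p, p.1 * p.2 ∂γ := by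
  have hexpand : ∀ p : ℝ × ℝ, dist p.1 p.2 ^ 2 = p.1 ^ 2 + p.2 ^ 2 - 2 * (p.1 * p.2) := fun p => by
    rw [Real.dist_eq, sq_abs]; ring
  have h₁ := integrable_comp_fst_of_map_fst hγ₁ hμ
  have h₂ := integrable_comp_snd_of_map_snd hγ₂ hν
  simp only [hexpand]
  rw [integral_sub ?_ ((integrable_fst_mul_snd hγ₁ hγ₂ hμ hν).const_mul 2),
    integral_add h₁ h₂, integral_const_mul,
    integral_comp_fst_of_map_fst hγ₁ (continuous_pow 2).aestronglyMeasurable,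
    integral_comp_snd_of_map_snd hγ₂ (continuous_pow 2).aestronglyMeasurable]
  exact h₁.add h₂

variable [IsProbabilityMeasure μ] [IsProbabilityMeasure ν]

/-- Against a coupling, `orientedIndicator X s * orientedIndicator Y t` has an expectation that
depends on the coupling only through the joint tail `γ (Ioi s ×ˢ Ioi t)`. -/
lemma integral_orientedIndicator_mul_of_coupling (hγ₁ : γ.map Prod.fst = μ)
    (hγ₂ : γ.map Prod.snd = ν) (s t : ℝ) :
    ∫ p, orientedIndicator p.1 s * orientedIndicator p.2 t ∂γ =
      γ.real (Ioi s ×ˢ Ioi t) - (if s < 0 then 1 else 0) * ν.real (Ioi t)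
        - (if t < 0 then 1 else 0) * ∫ x, orientedIndicator x s ∂μ := by
  have : IsProbabilityMeasure γ := isProbabilityMeasure_of_map_fst hγ₁
  have hcorner : Integrable (fun p => (Ioi s ×ˢ Ioi t).indicator (1 : ℝ × ℝ → ℝ) p) γ :=
    (integrable_const 1).indicator (measurableSet_Ioi.prod measurableSet_Ioi)
  have htail : Integrable (fun p : ℝ × ℝ => (Ioi t).indicator (1 : ℝ → ℝ) p.2) γ :=
    integrable_comp_snd_of_map_snd hγ₂ ((integrable_const 1).indicator measurableSet_Ioi)
  have hstep : Integrable (fun x => orientedIndicator x s) μ :=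
    ((integrable_const (1 : ℝ)).indicator measurableSet_Ioi).sub (integrable_const _)
  simp only [orientedIndicator_mul_orientedIndicator, Prod.mk.eta]
  rw [integral_sub ?_ ((integrable_comp_fst_of_map_fst hγ₁ hstep).const_mul _),
    integral_sub hcorner (htail.const_mul _), integral_const_mul, integral_const_mul,
    integral_indicator_one (measurableSet_Ioi.prod measurableSet_Ioi),
    integral_comp_snd_of_map_snd hγ₂
      (measurable_one.indicator measurableSet_Ioi).aestronglyMeasurable,
    integral_indicator_one measurableSet_Ioi,
    integral_comp_fst_of_map_fst hγ₁ hstep.aestronglyMeasurable]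
  exact hcorner.sub (htail.const_mul _)

lemma integral_orientedIndicator_mul_le_comonotoneCoupling (hγ₁ : γ.map Prod.fst = μ)
    (hγ₂ : γ.map Prod.snd = ν) (s t : ℝ) :
    ∫ p, orientedIndicator p.1 s * orientedIndicator p.2 t ∂γ ≤
      ∫ p, orientedIndicator p.1 s * orientedIndicator p.2 t ∂(comonotoneCoupling μ ν) := by
  rw [integral_orientedIndicator_mul_of_coupling hγ₁ hγ₂,
    integral_orientedIndicator_mul_of_coupling (comonotoneCoupling_map_fst μ ν)
      (comonotoneCoupling_map_snd μ ν), comonotoneCoupling_real_Ioi_prod_Ioi]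
  gcongr
  exact measureReal_prod_le_min hγ₁ hγ₂ measurableSet_Ioi measurableSet_Ioi

lemma integral_fst_mul_snd_le_comonotoneCoupling (hγ₁ : γ.map Prod.fst = μ)
    (hγ₂ : γ.map Prod.snd = ν) (hμ : Integrable (fun x => x ^ 2) μ)
    (hν : Integrable (fun x => x ^ 2) ν) :
    ∫ p, p.1 * p.2 ∂γ ≤ ∫ p, p.1 * p.2 ∂(comonotoneCoupling μ ν) := by
  have : IsProbabilityMeasure γ := isProbabilityMeasure_of_map_fst hγ₁
  have hγ := integrable_fst_mul_snd hγ₁ hγ₂ hμ hν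
  have hσ := integrable_fst_mul_snd (comonotoneCoupling_map_fst μ ν)
    (comonotoneCoupling_map_snd μ ν) hμ hν
  rw [integral_mul_eq_integral_integral_orientedIndicator hγ,
    integral_mul_eq_integral_integral_orientedIndicator hσ]
  exact integral_mono (integrable_orientedIndicator_mul_prod hγ).swap.integral_prod_left
    (integrable_orientedIndicator_mul_prod hσ).swap.integral_prod_left
    fun q => integral_orientedIndicator_mul_le_comonotoneCoupling hγ₁ hγ₂ q.1 q.2

end Optimality

/-- For probability measures on ℝ with finite second moments, the squared
2-Wasserstein distance equals the integral over τ ∈ (0,1) of the squared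
difference of the quantile functions. -/
theorem w2sq_eq_integral_quantile (μ ν : Measure ℝ)
    [IsProbabilityMeasure μ] [IsProbabilityMeasure ν]
    (hμ : Integrable (fun x => x ^ 2) μ) (hν : Integrable (fun x => x ^ 2) ν) :
    W2sq μ ν = ∫ τ in Ioo (0:ℝ) 1, |quantile μ τ - quantile ν τ| ^ 2 := by
  have hσ₁ := comonotoneCoupling_map_fst μ ν
  have hσ₂ := comonotoneCoupling_map_snd μ ν
  rw [W2sq, ← integral_dist_sq_comonotoneCoupling]
  refine IsLeast.csInf_eq ⟨⟨_, hσ₁, hσ₂, rfl⟩, ?_⟩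
  rintro c ⟨γ, hγ₁, hγ₂, rfl⟩
  rw [integral_dist_sq_eq hγ₁ hγ₂ hμ hν, integral_dist_sq_eq hσ₁ hσ₂ hμ hν]
  linarith [integral_fst_mul_snd_le_comonotoneCoupling hγ₁ hγ₂ hμ hν]
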